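/- With notations as above (L, α₊, α₋ from the Lyapunov construction with p ≠ 1), there exists ω > 0 such that along solutions of the system, d/dt L(W,Z) ≤ -ω(μ²(W-1)² + α₊² p (μ - f_p(Z))²). -/

import Mathlib

/-!
Write `A = μ (W - 1)` and `u = μ - f(Z)`. Along solutions, `d/dt (G ∘ W) = -(W - 1)(u + A)/k` and
`d/dt (F ∘ Z) = -u (p u + (p - 1) A)`, so with `β = α₊² + α₋²` the derivative of the Lyapunov
function is `-2A(A + u) - β u (p u + (p - 1) A)`. The weights `α± = 1/(√p ± 1)` are chosen so that
this quadratic form equals `-((A + α₊√p u)² + (A + α₋√p u)²)`. The two squares are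
`(a + b)² + (a + α b)²` with `b = α₊√p u` and `α = α₋/α₊ ≠ 1` (as `p ≠ 1`), a positive definite
form in `(a, b)`, hence bounded below by `ω (a² + b²)`.
-/

open Set

theorem exists_pos_mul_sq_add_sq_le {α : ℝ} (hα : α ≠ 1) :
    ∃ ω > 0, ∀ a b : ℝ, ω * (a ^ 2 + b ^ 2) ≤ (a + b) ^ 2 + (a + α * b) ^ 2 := by
  have hα' : 0 < (1 - α) ^ 2 := by positivity [sub_ne_zero.mpr hα.symm]
  -- With `x = a + b`, `y = a + α b`: `(1 - α) b = x - y` and `a = x - b`.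
  refine ⟨(1 - α) ^ 2 / (2 * (1 - α) ^ 2 + 6), by positivity, fun a b => ?_⟩
  rw [div_mul_eq_mul_div, div_le_iff₀ (by positivity)]
  nlinarith [sq_nonneg (2 * a + b + α * b), mul_nonneg hα'.le (sq_nonneg (a + 2 * b)),
    mul_nonneg hα'.le (sq_nonneg (a + α * b))]

theorem sq_add_sq_eq_dissipation {s : ℝ} (hs1 : s + 1 ≠ 0) (hs2 : s - 1 ≠ 0) (A u : ℝ) :
    (A + s / (s + 1) * u) ^ 2 + (A + s / (s - 1) * u) ^ 2 =
      2 * A * (A + u) +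
        ((1 / (s + 1)) ^ 2 + (1 / (s - 1)) ^ 2) * u * (s ^ 2 * u + (s ^ 2 - 1) * A) := by
  field_simp
  ring

theorem hasDerivAt_intervalIntegral_of_continuousOn {g : ℝ → ℝ} {s : Set ℝ} (hs : IsOpen s)
    (hs' : s.OrdConnected) (hg : ContinuousOn g s) {a z : ℝ} (ha : a ∈ s) (hz : z ∈ s) :
    HasDerivAt (fun x => ∫ y in a..x, g y) (g z) z :=
  intervalIntegral.integral_hasDerivAt_right
    ((hg.mono (hs'.uIcc_subset ha hz)).intervalIntegrable)
    (hg.stronglyMeasurableAtFilter hs z hz) (hg.continuousAt (hs.mem_nhds hz))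

theorem hasDerivAt_lyapunov {μ k p β : ℝ} (hk : k ≠ 0) {f : ℝ → ℝ}
    (hf : ContinuousOn f (Ioi 0)) {W Z : ℝ → ℝ} {t : ℝ} (hWt : 0 < W t) (hZt : 0 < Z t)
    (hW : HasDerivAt W (-(1/k) * W t * (μ - f (Z t)) - (μ/k) * W t * (W t - 1)) t)
    (hZ : HasDerivAt Z (-p * Z t * (μ - f (Z t)) - (p - 1) * μ * Z t * (W t - 1)) t)
    {G F : ℝ → ℝ} (hG : ∀ w : ℝ, G w = w - 1 - Real.log w)
    (hF : ∀ z : ℝ, F z = ∫ s in (1:ℝ)..z, (μ - f s) / s) :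
    HasDerivAt (fun t => 2*k*μ * G (W t) + β * F (Z t))
      (-2 * (μ * (W t - 1)) * (μ * (W t - 1) + (μ - f (Z t)))
        - β * (μ - f (Z t)) * (p * (μ - f (Z t)) + (p - 1) * (μ * (W t - 1)))) t := by
  obtain rfl : G = _ := funext hG
  obtain rfl : F = _ := funext hF
  have hg : ContinuousOn (fun x => (μ - f x) / x) (Ioi 0) :=
    (continuousOn_const.sub hf).div continuousOn_id fun x hx => (mem_Ioi.1 hx).ne'
  have hFZ := (hasDerivAt_intervalIntegral_of_continuousOn isOpen_Ioi ordConnected_Ioi hg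
    (mem_Ioi.2 one_pos) hZt).comp t hZ
  have hGW := (hW.sub_const 1).sub (hW.log hWt.ne')
  refine ((hGW.const_mul (2*k*μ)).add (hFZ.const_mul β)).congr_deriv ?_
  have := hWt.ne'
  have := hZt.ne'
  field_simp
  ring

theorem stmt_8_general (μ k p : ℝ) (hk : 0 < k) (hp : 0 < p) (hp1 : p ≠ 1)
    (f : ℝ → ℝ) (hf : ContinuousOn f (Set.Ioi 0))
    (W Z : ℝ → ℝ) (hWpos : ∀ t, 0 < W t) (hZpos : ∀ t, 0 < Z t)
    (hW : ∀ t : ℝ, HasDerivAt W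
      (-(1/k) * W t * (μ - f (Z t)) - (μ/k) * W t * (W t - 1)) t)
    (hZ : ∀ t : ℝ, HasDerivAt Z
      (-p * Z t * (μ - f (Z t)) - (p - 1) * μ * Z t * (W t - 1)) t)
    (G F : ℝ → ℝ)
    (hG : ∀ w : ℝ, G w = w - 1 - Real.log w)
    (hF : ∀ z : ℝ, F z = ∫ s in (1:ℝ)..z, (μ - f s) / s)
    (αp αm : ℝ) (hαp : αp = 1/(Real.sqrt p + 1)) (hαm : αm = 1/(Real.sqrt p - 1)) :
    ∃ ω > 0, ∀ t : ℝ,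
      deriv (fun t => 2*k*μ * G (W t) + (αp^2 + αm^2) * F (Z t)) t ≤
        -ω * (μ^2*(W t - 1)^2 + αp^2 * p * (μ - f (Z t))^2) := by
  have hs : √p ^ 2 = p := Real.sq_sqrt hp.le
  have hs1 : √p + 1 ≠ 0 := by positivity
  have hs2 : √p - 1 ≠ 0 := sub_ne_zero.2 fun h => hp1 (by rw [← hs, h, one_pow])
  have hα : (√p + 1) / (√p - 1) ≠ 1 := by
    rw [Ne, div_eq_one_iff_eq hs2]
    intro h
    linarith
  obtain ⟨ω, hω, hquad⟩ := exists_pos_mul_sq_add_sq_le hα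
  refine ⟨ω, hω, fun t => ?_⟩
  rw [(hasDerivAt_lyapunov hk.ne' hf (hWpos t) (hZpos t) (hW t) (hZ t) hG hF).deriv]
  set u := μ - f (Z t)
  have key := hquad (μ * (W t - 1)) (√p / (√p + 1) * u)
  rw [show (√p + 1) / (√p - 1) * (√p / (√p + 1) * u) = √p / (√p - 1) * u by field_simp,
    sq_add_sq_eq_dissipation hs1 hs2] at key
  subst hαp hαm
  generalize √p = s at *
  subst hs
  linear_combination key

theorem stmt_8 (μ k p : ℝ) (hμ : 0 < μ) (hk : 0 < k) (hp : 0 < p) (hp1 : p ≠ 1)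
    (f : ℝ → ℝ) (hf : ContinuousOn f (Set.Ioi 0))
    (W Z : ℝ → ℝ) (hWpos : ∀ t, 0 < W t) (hZpos : ∀ t, 0 < Z t)
    (hW : ∀ t : ℝ, HasDerivAt W
      (-(1/k) * W t * (μ - f (Z t)) - (μ/k) * W t * (W t - 1)) t)
    (hZ : ∀ t : ℝ, HasDerivAt Z
      (-p * Z t * (μ - f (Z t)) - (p - 1) * μ * Z t * (W t - 1)) t)
    (G F : ℝ → ℝ)
    (hG : ∀ w : ℝ, G w = w - 1 - Real.log w)
    (hF : ∀ z : ℝ, F z = ∫ s in (1:ℝ)..z, (μ - f s) / s)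
    (αp αm : ℝ) (hαp : αp = 1/(Real.sqrt p + 1)) (hαm : αm = 1/(Real.sqrt p - 1)) :
    ∃ ω > 0, ∀ t : ℝ,
      deriv (fun t => 2*k*μ * G (W t) + (αp^2 + αm^2) * F (Z t)) t ≤
        -ω * (μ^2*(W t - 1)^2 + αp^2 * p * (μ - f (Z t))^2) :=
  stmt_8_general μ k p hk hp hp1 f hf W Z hWpos hZpos hW hZ G F hG hF αp αm hαp hαm
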